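/- arXiv:2605.10495 — 6 statements merged into one kernel-verified Lean document; each statement's English description precedes it below -/
import Mathlib

section
/- Let (𝔸, Θ, u) be a finite decision problem with Θ = {θ₁, …, θ_m}, let π₀ be a probability distribution on Θ, and let a ∈ 𝔸. Then the set {ε ∈ [0,1] : there exists π ∈ B(π₀, ε) such that a is a Bayes-act with respect to π} is empty if and only if a is strictly inadmissible, i.e., if and only if there exist weights β_b ≥ 0 for b ∈ 𝔸 \ {a} with Σ_{b ≠ a} β_b = 1 such that u(a, θ_j) < Σ_{b ≠ a} β_b · u(b, θ_j) for all j = 1, …, m. (Equivalently, the contamination need con(a, π₀), defined as the infimum of this set with inf ∅ = +∞, equals +∞ if and only if a is strictly inadmissible.) -/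
open Finset

/-- A probability distribution on the finite state space `Fin m`. -/
def IsDist {m : ℕ} (π : Fin m → ℝ) : Prop :=
  (∀ j, 0 ≤ π j) ∧ ∑ j, π j = 1

/-- `a` is a Bayes-act with respect to `π`. -/
def IsBayes {A : Type} [Fintype A] {m : ℕ} (u : A → Fin m → ℝ)
    (π : Fin m → ℝ) (a : A) : Prop :=
  ∀ b : A, ∑ j, π j * u b j ≤ ∑ j, π j * u a j

/-- Membership in the neighborhood `B(π₀, ε)`. -/
def InBall {m : ℕ} (π₀ : Fin m → ℝ) (ε : ℝ) (π : Fin m → ℝ) : Prop :=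
  IsDist π ∧ ∀ j, π₀ j - ε ≤ π j ∧ π j ≤ π₀ j + ε

/-- `a` is strictly inadmissible: some convex mixture of the other acts strictly
dominates `a` in every state. -/
def StrictlyInadmissible {A : Type} [Fintype A] [DecidableEq A] {m : ℕ}
    (u : A → Fin m → ℝ) (a : A) : Prop :=
  ∃ β : A → ℝ, (∀ b, 0 ≤ β b) ∧ (∑ b ∈ Finset.univ.erase a, β b = 1) ∧
    ∀ j, u a j < ∑ b ∈ Finset.univ.erase a, β b * u b j

lemma clm_apply_eq {m : ℕ} (f : (Fin m → ℝ) →L[ℝ] ℝ) (x : Fin m → ℝ) :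
    f x = ∑ j, x j * f (fun i => if j = i then (1:ℝ) else 0) := by
  conv_lhs => rw [pi_eq_sum_univ x]
  rw [map_sum]
  simp only [map_smul, smul_eq_mul]

lemma sep_core {A : Type} [Fintype A] [DecidableEq A] [Nontrivial A] {m : ℕ}
    (u : A → Fin m → ℝ) (a : A) (hm : Nonempty (Fin m))
    (hno : ¬ StrictlyInadmissible u a) : ∃ π, IsDist π ∧ IsBayes u π a := by
  classical
  set s : Finset A := Finset.univ.erase a with hs
  obtain ⟨b₀, hb₀⟩ := exists_ne a
  have hb₀s : b₀ ∈ s := Finset.mem_erase.2 ⟨hb₀, Finset.mem_univ _⟩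
  set C : Set (Fin m → ℝ) := {x | ∃ β : A → ℝ, (∀ b, 0 ≤ β b) ∧ (∑ b ∈ s, β b = 1) ∧
      x = fun j => ∑ b ∈ s, β b * (u b j - u a j)} with hC
  set O : Set (Fin m → ℝ) := Set.univ.pi (fun _ : Fin m => Set.Ioi (0:ℝ)) with hO
  have hOmem : ∀ x : Fin m → ℝ, x ∈ O ↔ ∀ j, 0 < x j := by
    intro x; simp [hO, Set.mem_pi]
  have hOconv : Convex ℝ O := convex_pi (fun i _ => convex_Ioi 0)
  have hOopen : IsOpen O := isOpen_set_pi Set.finite_univ (fun i _ => isOpen_Ioi)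
  have hCconv : Convex ℝ C := by
    rintro x ⟨β, hβ0, hβ1, rfl⟩ y ⟨γ, hγ0, hγ1, rfl⟩ p q hp hq hpq
    refine ⟨fun b => p * β b + q * γ b,
      fun b => add_nonneg (mul_nonneg hp (hβ0 b)) (mul_nonneg hq (hγ0 b)), ?_, ?_⟩
    · rw [Finset.sum_add_distrib, ← Finset.mul_sum, ← Finset.mul_sum, hβ1, hγ1]
      simpa using hpq
    · funext j
      simp only [Pi.add_apply, Pi.smul_apply, smul_eq_mul, Finset.mul_sum,
        Finset.sum_add_distrib, add_mul]
      congr 1 <;> exact Finset.sum_congr rfl fun b _ => by ring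
  have hdisj : Disjoint O C := by
    rw [Set.disjoint_right]
    rintro x ⟨β, hβ0, hβ1, rfl⟩ hxO
    rw [hOmem] at hxO
    refine hno ⟨β, hβ0, hβ1, fun j => ?_⟩
    have := hxO j
    have hexp : ∑ b ∈ s, β b * (u b j - u a j)
        = ∑ b ∈ s, β b * u b j - (∑ b ∈ s, β b) * u a j := by
      rw [Finset.sum_mul, ← Finset.sum_sub_distrib]
      exact Finset.sum_congr rfl fun b _ => by ring
    rw [hexp, hβ1, one_mul] at this
    linarith
  obtain ⟨f, c, hfO, hfC⟩ := geometric_hahn_banach_open hOconv hOopen hCconv hdisj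
  set w : Fin m → ℝ := fun j => f (fun i => if j = i then (1:ℝ) else 0) with hw
  set ones : Fin m → ℝ := fun _ => 1 with hones
  have honesO : ones ∈ O := (hOmem _).2 fun j => one_pos
  have hfO0 : ∀ y ∈ O, f y ≤ 0 := by
    intro y hy
    by_contra h
    push_neg at h
    have hmem : ((|c| + 1) / f y) • y ∈ O := by
      rw [hOmem]; intro j
      have := (hOmem y).1 hy j
      have hpos : 0 < (|c| + 1) / f y := by positivity
      simpa [Pi.smul_apply, smul_eq_mul] using mul_pos hpos this
    have := hfO _ hmem
    rw [map_smul, smul_eq_mul, div_mul_cancel₀ _ h.ne'] at this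
    have := le_abs_self c
    linarith
  have hc0 : 0 ≤ c := by
    by_contra h
    push_neg at h
    have h1 : f ones ≤ 0 := hfO0 ones honesO
    rcases eq_or_lt_of_le h1 with heq | hlt
    · have := hfO ones honesO; rw [heq] at this; linarith
    · set δ := c / (2 * f ones) with hδdef
      have hδ : 0 < δ := div_pos_iff.2 (Or.inr ⟨h, by linarith⟩)
      have hmem : δ • ones ∈ O := by
        rw [hOmem]; intro j
        simpa [Pi.smul_apply, smul_eq_mul, hones] using hδ
      have h2 := hfO _ hmem
      rw [map_smul, smul_eq_mul] at h2
      have h3 : δ * f ones = c / 2 := by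
        rw [hδdef, div_mul_eq_mul_div, mul_comm 2 (f ones), ← div_div,
          mul_div_assoc, div_self hlt.ne, mul_one]
      linarith
  have hwle : ∀ j, w j ≤ 0 := by
    intro j
    have key : ∀ δ : ℝ, 0 < δ → w j + δ * f ones ≤ 0 := by
      intro δ hδ
      have hmem : ((fun i => if j = i then (1:ℝ) else 0) + δ • ones) ∈ O := by
        rw [hOmem]; intro i
        simp only [Pi.add_apply, Pi.smul_apply, smul_eq_mul, hones]
        by_cases hij : j = i <;> simp [hij] <;> linarith
      have := hfO0 _ hmem
      rwa [map_add, map_smul, smul_eq_mul] at this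
    by_contra h
    push_neg at h
    rcases le_or_gt 0 (f ones) with h1 | h1
    · have := key 1 one_pos; nlinarith
    · have hδ : 0 < w j / (-2 * f ones) := div_pos h (by linarith)
      have := key _ hδ
      have heq : w j / (-2 * f ones) * f ones = -(w j / 2) := by
        rw [div_mul_eq_mul_div, mul_comm (w j) (f ones), mul_comm (-2:ℝ) (f ones),
          mul_div_mul_left _ _ h1.ne]
        ring
      rw [heq] at this; linarith
  have hCne : (fun j => u b₀ j - u a j) ∈ C := by
    refine ⟨fun b => if b = b₀ then 1 else 0, fun b => by positivity, ?_, ?_⟩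
    · simp [Finset.sum_ite_eq', hb₀s]
    · funext j
      simp only [ite_mul, one_mul, zero_mul]
      rw [Finset.sum_ite_eq' s b₀ (fun b => u b j - u a j)]
      simp [hb₀s]
  set S := ∑ j, -w j with hS
  have hS0 : 0 ≤ S := Finset.sum_nonneg fun j _ => neg_nonneg.2 (hwle j)
  have hSpos : 0 < S := by
    rcases eq_or_lt_of_le hS0 with heq | h
    · exfalso
      have hall : ∀ j, w j = 0 := by
        intro j
        have := (Finset.sum_eq_zero_iff_of_nonneg
          (fun j (_ : j ∈ Finset.univ) => neg_nonneg.2 (hwle j))).1 heq.symm j (Finset.mem_univ j)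
        linarith
      have h1 : f ones = 0 := by
        rw [clm_apply_eq]
        exact Finset.sum_eq_zero fun j _ => by
          rw [show f (fun i => if j = i then (1:ℝ) else 0) = w j from rfl, hall j, mul_zero]
      have h2 := hfO ones honesO
      rw [h1] at h2
      have h3 := hfC _ hCne
      rw [clm_apply_eq] at h3
      have h3' : c ≤ ∑ j, (u b₀ j - u a j) * w j := h3
      have hz : ∑ j, (u b₀ j - u a j) * w j = 0 :=
        Finset.sum_eq_zero fun j _ => by rw [hall j, mul_zero]
      rw [hz] at h3'
      linarith
    · exact h
  refine ⟨fun j => -w j / S, ⟨⟨fun j => div_nonneg (neg_nonneg.2 (hwle j)) hS0, ?_⟩, ?_⟩⟩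
  · rw [← Finset.sum_div, ← hS, div_self hSpos.ne']
  · intro b
    by_cases hb : b = a
    · subst hb; exact le_rfl
    · show ∑ j, (-w j / S) * u b j ≤ ∑ j, (-w j / S) * u a j
      have hbs : b ∈ s := Finset.mem_erase.2 ⟨hb, Finset.mem_univ _⟩
      have hvb : (fun j => u b j - u a j) ∈ C := by
        refine ⟨fun b' => if b' = b then 1 else 0, fun b' => by positivity, ?_, ?_⟩
        · simp [Finset.sum_ite_eq', hbs]
        · funext j
          simp only [ite_mul, one_mul, zero_mul]
          rw [Finset.sum_ite_eq' s b (fun b' => u b' j - u a j)]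
          simp [hbs]
      have h1 : c ≤ f (fun j => u b j - u a j) := hfC _ hvb
      rw [clm_apply_eq] at h1
      have h2 : 0 ≤ ∑ j, (u b j - u a j) * w j := le_trans hc0 h1
      have h3 : ∑ j, (-w j / S) * (u b j - u a j) ≤ 0 := by
        have heq : ∑ j, (-w j / S) * (u b j - u a j)
            = (-(∑ j, (u b j - u a j) * w j)) / S := by
          rw [eq_div_iff hSpos.ne', Finset.sum_mul, ← Finset.sum_neg_distrib]
          exact Finset.sum_congr rfl fun j _ => by
            rw [div_mul_eq_mul_div, div_mul_cancel₀ _ hSpos.ne']; ring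
        rw [heq]
        exact div_nonpos_of_nonpos_of_nonneg (neg_nonpos.2 h2) hS0
      have h4 : ∑ j, (-w j / S) * (u b j - u a j)
          = ∑ j, (-w j / S) * u b j - ∑ j, (-w j / S) * u a j := by
        rw [← Finset.sum_sub_distrib]
        exact Finset.sum_congr rfl fun j _ => by ring
      rw [h4] at h3
      linarith

/-- The set of ε ∈ [0,1] for which `a` becomes Bayes-optimal under some prior in
`B(π₀, ε)` is empty iff `a` is strictly inadmissible (i.e. the contamination need,
the inf of this set with inf ∅ = +∞, is +∞ iff `a` is strictly inadmissible). -/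
theorem contamination_need_infty_iff_strictly_inadmissible
    {A : Type} [Fintype A] [DecidableEq A] [Nontrivial A] {m : ℕ}
    (u : A → Fin m → ℝ) (π₀ : Fin m → ℝ) (hπ₀ : IsDist π₀) (a : A) :
    {ε : ℝ | ε ∈ Set.Icc (0 : ℝ) 1 ∧ ∃ π, InBall π₀ ε π ∧ IsBayes u π a} = ∅ ↔
      StrictlyInadmissible u a := by
  constructor
  · intro hempty
    by_contra hnSI
    have hm : Nonempty (Fin m) := by
      by_contra h
      rw [not_nonempty_iff] at h
      have := hπ₀.2
      rw [Finset.univ_eq_empty, Finset.sum_empty] at this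
      exact one_ne_zero this.symm
    obtain ⟨π, hdist, hbayes⟩ := sep_core u a hm hnSI
    have hπ1 : ∀ j, π j ≤ 1 := fun j => by
      have := Finset.single_le_sum (f := π) (fun i _ => hdist.1 i) (Finset.mem_univ j)
      rwa [hdist.2] at this
    have hπ₀1 : ∀ j, π₀ j ≤ 1 := fun j => by
      have := Finset.single_le_sum (f := π₀) (fun i _ => hπ₀.1 i) (Finset.mem_univ j)
      rwa [hπ₀.2] at this
    have hmem : (1:ℝ) ∈ {ε : ℝ | ε ∈ Set.Icc (0 : ℝ) 1 ∧
        ∃ π, InBall π₀ ε π ∧ IsBayes u π a} := by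
      refine ⟨⟨zero_le_one, le_refl 1⟩, π, ⟨hdist, fun j => ⟨?_, ?_⟩⟩, hbayes⟩
      · have := hdist.1 j; have := hπ₀1 j; linarith
      · have := hπ1 j; have := hπ₀.1 j; linarith
    rw [hempty] at hmem
    exact hmem
  · intro hSI
    rw [Set.eq_empty_iff_forall_notMem]
    rintro ε ⟨hIcc, π, ⟨hdist, hball⟩, hbayes⟩
    obtain ⟨β, hβ0, hβ1, hβlt⟩ := hSI
    have hjpos : ∃ j, 0 < π j := by
      by_contra h
      push_neg at h
      have : ∑ j, π j = 0 := Finset.sum_eq_zero fun j _ => le_antisymm (h j) (hdist.1 j)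
      rw [hdist.2] at this
      exact one_ne_zero this
    obtain ⟨j₀, hj₀⟩ := hjpos
    have h1 : ∑ j, π j * u a j
        < ∑ j, π j * (∑ b ∈ Finset.univ.erase a, β b * u b j) :=
      Finset.sum_lt_sum
        (fun j _ => mul_le_mul_of_nonneg_left (hβlt j).le (hdist.1 j))
        ⟨j₀, Finset.mem_univ _, mul_lt_mul_of_pos_left (hβlt j₀) hj₀⟩
    have h2 : ∑ j, π j * (∑ b ∈ Finset.univ.erase a, β b * u b j)
        = ∑ b ∈ Finset.univ.erase a, β b * (∑ j, π j * u b j) := by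
      simp only [Finset.mul_sum]
      rw [Finset.sum_comm]
      exact Finset.sum_congr rfl fun b _ => Finset.sum_congr rfl fun j _ => by ring
    have h3 : ∑ b ∈ Finset.univ.erase a, β b * (∑ j, π j * u b j)
        ≤ ∑ b ∈ Finset.univ.erase a, β b * (∑ j, π j * u a j) :=
      Finset.sum_le_sum fun b _ => mul_le_mul_of_nonneg_left (hbayes b) (hβ0 b)
    have h4 : ∑ b ∈ Finset.univ.erase a, β b * (∑ j, π j * u a j)
        = ∑ j, π j * u a j := by
      rw [← Finset.sum_mul, hβ1, one_mul]
    rw [h2] at h1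
    rw [h4] at h3
    linarith
end

section
/- Let (𝔸, Θ, u) be a finite decision problem with Θ = {θ₁, …, θ_m} and let a ∈ 𝔸. If there is no probability distribution π on Θ such that a is a Bayes-act with respect to π, then there exist weights β_b ≥ 0 for b ∈ 𝔸 \ {a} with Σ_{b ≠ a} β_b = 1 such that u(a, θ_j) < Σ_{b ≠ a} β_b · u(b, θ_j) for all j = 1, …, m. -/
open Finset

/-- If there is no probability distribution on Θ making `a` a Bayes-act, then `a`
is strictly inadmissible: some convex mixture of the other acts strictly dominates
it in every state. -/
theorem not_bayes_anywhere_imp_strictly_inadmissible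
    {A : Type} [Fintype A] [DecidableEq A] [Nontrivial A] {m : ℕ}
    (u : A → Fin m → ℝ) (a : A)
    (h : ¬ ∃ π : Fin m → ℝ, IsDist π ∧ IsBayes u π a) :
    StrictlyInadmissible u a := by
  by_contra hni
  -- the payoff differences
  set g : A → (Fin m → ℝ) := fun b j => u b j - u a j with hg
  -- the convex set of mixtures over acts ≠ a
  set C : Set (Fin m → ℝ) := {x | ∃ β : A → ℝ, (∀ b, 0 ≤ β b) ∧
      (∑ b ∈ Finset.univ.erase a, β b = 1) ∧
      x = fun j => ∑ b ∈ Finset.univ.erase a, β b * g b j} with hC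
  -- the open positive orthant
  set P : Set (Fin m → ℝ) := Set.univ.pi fun _ => Set.Ioi (0:ℝ) with hP
  have hPmem : ∀ x : Fin m → ℝ, x ∈ P ↔ ∀ j, 0 < x j := by
    intro x; constructor
    · intro hx j; exact hx j (Set.mem_univ j)
    · intro hx j _; exact hx j
  have hPopen : IsOpen P := isOpen_set_pi Set.finite_univ (fun _ _ => isOpen_Ioi)
  have hPconv : Convex ℝ P := convex_pi fun _ _ => convex_Ioi 0
  have hCconv : Convex ℝ C := by
    rintro x ⟨β₁, hβ₁0, hβ₁s, rfl⟩ y ⟨β₂, hβ₂0, hβ₂s, rfl⟩ t s' ht hs' hts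
    refine ⟨fun b => t * β₁ b + s' * β₂ b, ?_, ?_, ?_⟩
    · intro b; exact add_nonneg (mul_nonneg ht (hβ₁0 b)) (mul_nonneg hs' (hβ₂0 b))
    · rw [Finset.sum_add_distrib, ← Finset.mul_sum, ← Finset.mul_sum, hβ₁s, hβ₂s]
      linarith
    · funext j
      simp only [Pi.add_apply, Pi.smul_apply, smul_eq_mul, add_mul,
        Finset.sum_add_distrib, Finset.mul_sum, mul_assoc]
  have hmem : ∀ b ∈ Finset.univ.erase a, g b ∈ C := by
    intro b hb
    refine ⟨fun c => if c = b then 1 else 0, ?_, ?_, ?_⟩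
    · intro c; dsimp only; split <;> norm_num
    · rw [Finset.sum_ite_eq' (Finset.univ.erase a) b (fun _ => (1:ℝ))]
      simp [hb]
    · funext j
      rw [Finset.sum_eq_single b]
      · simp
      · intro c _ hcb; simp [hcb]
      · intro hbn; exact absurd hb hbn
  have hdisj : Disjoint P C := by
    rw [Set.disjoint_left]
    rintro x hxP ⟨β, hβ0, hβs, rfl⟩
    apply hni
    refine ⟨β, hβ0, hβs, fun j => ?_⟩
    have h1 := (hPmem _).mp hxP j
    have h2 : ∑ b ∈ Finset.univ.erase a, β b * g b j
        = (∑ b ∈ Finset.univ.erase a, β b * u b j) - u a j := by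
      simp only [hg, mul_sub, Finset.sum_sub_distrib, ← Finset.sum_mul, hβs, one_mul]
    rw [h2] at h1
    linarith
  obtain ⟨b₀, hb₀ne⟩ := exists_ne a
  have hb₀ : b₀ ∈ Finset.univ.erase a := Finset.mem_erase.2 ⟨hb₀ne, Finset.mem_univ _⟩
  have hgb₀ : g b₀ ∈ C := hmem b₀ hb₀
  -- separate
  obtain ⟨φ, s, hφP, hφC⟩ := geometric_hahn_banach_open hPconv hPopen hCconv hdisj
  rcases Nat.eq_zero_or_pos m with hm | hm
  · -- m = 0 : the orthant is everything, contradiction with disjointness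
    subst hm
    exact Set.disjoint_left.mp hdisj ((hPmem _).mpr (fun j => j.elim0)) hgb₀
  -- the all-ones vector is in P
  have hone : (fun _ : Fin m => (1:ℝ)) ∈ P := (hPmem _).mpr (fun _ => one_pos)
  have honeδ : ∀ δ : ℝ, 0 < δ → (fun _ : Fin m => δ) ∈ P := fun δ hδ =>
    (hPmem _).mpr (fun _ => hδ)
  have hφδ : ∀ δ : ℝ, 0 < δ → δ * φ (fun _ => (1:ℝ)) < s := by
    intro δ hδ
    have : (fun _ : Fin m => δ) = δ • (fun _ : Fin m => (1:ℝ)) := by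
      funext k; simp
    have h1 := hφP _ (honeδ δ hδ)
    rw [this, map_smul, smul_eq_mul] at h1
    exact h1
  -- s ≥ 0
  have hs0 : 0 ≤ s := by
    by_contra hs
    push_neg at hs
    have h1 : φ (fun _ => (1:ℝ)) < s := by
      have := hφδ 1 one_pos; linarith
    have hneg : φ (fun _ => (1:ℝ)) < 0 := lt_trans h1 hs
    have hδpos : 0 < s / (2 * φ (fun _ => (1:ℝ))) := by
      apply div_pos_of_neg_of_neg hs; linarith
    have h2 := hφδ _ hδpos
    have hw : φ (fun _ => (1:ℝ)) ≠ 0 := by linarith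
    have h3 : s / (2 * φ (fun _ => (1:ℝ))) * φ (fun _ => (1:ℝ)) = s / 2 := by
      field_simp
    linarith
  -- expansion of φ
  have hexp : ∀ x : Fin m → ℝ, φ x = ∑ j, x j * φ (Pi.single j (1:ℝ)) := by
    intro x
    have hx : x = ∑ j, x j • (Pi.single j (1:ℝ) : Fin m → ℝ) := by
      funext k
      simp [Pi.single_apply, Finset.sum_ite_eq']
    conv_lhs => rw [hx]
    rw [map_sum]
    simp [smul_eq_mul]
  -- the coefficients are ≤ 0
  have hcoef : ∀ j : Fin m, φ (Pi.single j (1:ℝ)) ≤ 0 := by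
    intro j
    by_contra hc
    push_neg at hc
    set c := φ (Pi.single j (1:ℝ)) with hcdef
    set w := φ (fun _ : Fin m => (1:ℝ)) with hwdef
    set t := (s + 1 + |w|) / c with htdef
    have ht : 0 < t := by
      apply div_pos _ hc
      have := abs_nonneg w; linarith
    have hmemP : (t • (Pi.single j (1:ℝ) : Fin m → ℝ) + (fun _ => (1:ℝ))) ∈ P := by
      refine (hPmem _).mpr (fun k => ?_)
      simp only [Pi.add_apply, Pi.smul_apply, smul_eq_mul, Pi.single_apply]
      split
      · linarith
      · norm_num
    have h1 := hφP _ hmemP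
    rw [map_add, map_smul, smul_eq_mul, ← hcdef, ← hwdef] at h1
    have h2 : t * c = s + 1 + |w| := by
      rw [htdef, div_mul_cancel₀]
      exact ne_of_gt hc
    have h3 := neg_abs_le w
    linarith
  -- build the prior
  set π' : Fin m → ℝ := fun j => -φ (Pi.single j (1:ℝ)) with hπ'
  have hπ'0 : ∀ j, 0 ≤ π' j := fun j => neg_nonneg.2 (hcoef j)
  set S := ∑ j, π' j with hS
  have hS0 : 0 ≤ S := Finset.sum_nonneg (fun j _ => hπ'0 j)
  have hSpos : 0 < S := by
    rcases lt_or_eq_of_le hS0 with h1 | h1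
    · exact h1
    · exfalso
      have hall : ∀ j ∈ Finset.univ, π' j = 0 :=
        (Finset.sum_eq_zero_iff_of_nonneg (fun j _ => hπ'0 j)).mp h1.symm
      have hzero : ∀ x : Fin m → ℝ, φ x = 0 := by
        intro x
        rw [hexp x]
        apply Finset.sum_eq_zero
        intro j _
        have := hall j (Finset.mem_univ j)
        have : φ (Pi.single j (1:ℝ)) = 0 := by
          have h2 : -φ (Pi.single j (1:ℝ)) = 0 := this
          linarith
        rw [this, mul_zero]
      have h2 := hφP _ hone
      have h3 := hφC _ hgb₀
      rw [hzero] at h2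
      rw [hzero] at h3
      linarith
  apply h
  refine ⟨fun j => π' j / S, ⟨fun j => div_nonneg (hπ'0 j) hS0, ?_⟩, ?_⟩
  · rw [← Finset.sum_div, ← hS, div_self (ne_of_gt hSpos)]
  · -- Bayes property
    intro b
    have key : ∑ j, (π' j / S) * g b j ≤ 0 → ∑ j, (π' j / S) * u b j ≤ ∑ j, (π' j / S) * u a j := by
      intro hk
      have : ∑ j, (π' j / S) * g b j
          = ∑ j, (π' j / S) * u b j - ∑ j, (π' j / S) * u a j := by
        simp only [hg, mul_sub, Finset.sum_sub_distrib]
      linarith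
    apply key
    rcases eq_or_ne b a with rfl | hba
    · apply le_of_eq
      apply Finset.sum_eq_zero
      intro j _
      simp [hg]
    · have hbmem : g b ∈ C := hmem b (Finset.mem_erase.2 ⟨hba, Finset.mem_univ _⟩)
      have h1 := hφC _ hbmem
      rw [hexp] at h1
      have h2 : ∑ j, g b j * φ (Pi.single j (1:ℝ)) = -∑ j, π' j * g b j := by
        rw [← Finset.sum_neg_distrib]
        apply Finset.sum_congr rfl
        intro j _
        simp [hπ']; ring
      rw [h2] at h1
      have h3 : ∑ j, π' j * g b j ≤ 0 := by linarith
      have h4 : ∑ j, (π' j / S) * g b j = (∑ j, π' j * g b j) / S := by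
        rw [Finset.sum_div]
        apply Finset.sum_congr rfl
        intro j _; ring
      rw [h4]
      exact div_nonpos_of_nonpos_of_nonneg h3 hS0
end

section
/- Let (𝔸, Θ, u) be a finite decision problem with Θ = {θ₁, …, θ_m}, let π₀ be a probability distribution on Θ, and let a ∈ 𝔸 be an act that is a Bayes-act with respect to at least one probability distribution on Θ. Then the contamination need satisfies con(a, π₀) = 0 if and only if a is a Bayes-act with respect to π₀. -/
open Finset

/-- For an act that is Bayes-optimal under at least one prior, the contamination need
vanishes iff the act is a Bayes-act with respect to the reference prior `π₀`. -/
theorem contamination_need_zero_iff_bayes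
    {A : Type} [Fintype A] {m : ℕ} (u : A → Fin m → ℝ)
    (π₀ : Fin m → ℝ) (hπ₀ : IsDist π₀) (a : A)
    (ha : ∃ π : Fin m → ℝ, IsDist π ∧ IsBayes u π a) :
    sInf {ε : ℝ | ε ∈ Set.Icc (0 : ℝ) 1 ∧ ∃ π, InBall π₀ ε π ∧ IsBayes u π a} = 0 ↔
      IsBayes u π₀ a := by
  set S : Set ℝ := {ε : ℝ | ε ∈ Set.Icc (0 : ℝ) 1 ∧ ∃ π, InBall π₀ ε π ∧ IsBayes u π a}
    with hS
  have hbdd : BddBelow S := ⟨0, fun x hx => hx.1.1⟩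
  have hne : S.Nonempty := by
    obtain ⟨π, hπ, hb⟩ := ha
    refine ⟨1, ⟨zero_le_one, le_refl 1⟩, π, ⟨hπ, fun j => ?_⟩, hb⟩
    have h1 : π j ≤ 1 := by
      have := Finset.single_le_sum (f := π) (fun i _ => hπ.1 i) (Finset.mem_univ j)
      linarith [hπ.2]
    have h2 : π₀ j ≤ 1 := by
      have := Finset.single_le_sum (f := π₀) (fun i _ => hπ₀.1 i) (Finset.mem_univ j)
      linarith [hπ₀.2]
    constructor
    · linarith [hπ.1 j]
    · linarith [hπ₀.1 j]
  constructor
  · intro hinf b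
    refine le_of_forall_pos_le_add fun δ hδ => ?_
    set M : ℝ := (∑ j, |u b j|) + (∑ j, |u a j|) with hM
    have hM0 : 0 ≤ M := by
      apply add_nonneg <;> exact Finset.sum_nonneg fun j _ => abs_nonneg _
    have hδ' : (0 : ℝ) < δ / (M + 1) := by positivity
    have : sInf S < δ / (M + 1) := hinf ▸ hδ'
    obtain ⟨ε, hεS, hεlt⟩ := (csInf_lt_iff hbdd hne).mp this
    obtain ⟨⟨hε0, hε1⟩, π, ⟨hπ, hball⟩, hbayes⟩ := hεS
    have key : ∀ c : A, |(∑ j, π₀ j * u c j) - ∑ j, π j * u c j| ≤ ε * ∑ j, |u c j| := by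
      intro c
      rw [← Finset.sum_sub_distrib, Finset.mul_sum]
      refine (Finset.abs_sum_le_sum_abs _ _).trans (Finset.sum_le_sum fun j _ => ?_)
      have : π₀ j * u c j - π j * u c j = (π₀ j - π j) * u c j := by ring
      rw [this, abs_mul]
      have : |π₀ j - π j| ≤ ε := by
        rw [abs_le]; constructor <;> [linarith [(hball j).2]; linarith [(hball j).1]]
      exact mul_le_mul_of_nonneg_right this (abs_nonneg _) |>.trans
        (mul_le_mul_of_nonneg_left (le_refl _) hε0)
    have kb := abs_le.mp (key b)
    have ka := abs_le.mp (key a)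
    have hbay := hbayes b
    have hεM : ε * M ≤ δ * M / (M + 1) := by
      have := mul_le_mul_of_nonneg_right (le_of_lt hεlt) hM0
      calc ε * M ≤ δ / (M + 1) * M := this
        _ = δ * M / (M + 1) := by ring
    have hlt : δ * M / (M + 1) < δ := by
      rw [div_lt_iff₀ (by linarith)]
      nlinarith
    have hsum : ε * (∑ j, |u b j|) + ε * (∑ j, |u a j|) = ε * M := by rw [hM]; ring
    linarith [kb.1, kb.2, ka.1, ka.2]
  · intro hbayes
    apply le_antisymm
    · apply csInf_le hbdd
      exact ⟨⟨le_refl 0, zero_le_one⟩, π₀, ⟨hπ₀, fun j => by constructor <;> linarith⟩, hbayes⟩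
    · exact le_csInf hne fun x hx => hx.1.1
end

section
/- Let (𝔸, Θ, u) be a finite decision problem with Θ = {θ₁, …, θ_m}, let π₀ be a probability distribution on Θ, and let a ∈ 𝔸 be a Bayes-act with respect to π₀. Then for every ε ≥ 0, the act a is a Bayes-act with respect to every π ∈ B(π₀, ε) if and only if ε ≤ rob(a, π₀). In particular, the set {ε ≥ 0 : a is a Bayes-act with respect to every π ∈ B(π₀, ε)} is the interval [0, rob(a, π₀)], and the supremum defining rob(a, π₀) is attained: a is a Bayes-act with respect to every π ∈ B(π₀, rob(a, π₀)). -/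
open Finset

/-- For a Bayes-act `a` w.r.t. `π₀` (which fails to be Bayes for some prior, so the
robustness radius is finite), the set `{ε ≥ 0 : a ∈ 𝔸_π ∀ π ∈ B(π₀,ε)}` is exactly
the interval `[0, rob(a,π₀)]`, and the supremum defining `rob(a,π₀)` is attained. -/
theorem robustness_radius_interval_and_attained
    {A : Type} [Fintype A] {m : ℕ} (u : A → Fin m → ℝ)
    (π₀ : Fin m → ℝ) (hπ₀ : IsDist π₀) (a : A) (ha : IsBayes u π₀ a)
    (hfail : ∃ π : Fin m → ℝ, IsDist π ∧ ¬ IsBayes u π a) :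
    (∀ ε : ℝ, 0 ≤ ε →
      ((∀ π, InBall π₀ ε π → IsBayes u π a) ↔
        ε ≤ sSup {ε' : ℝ | 0 ≤ ε' ∧ ∀ π, InBall π₀ ε' π → IsBayes u π a})) ∧
    (∀ π, InBall π₀
        (sSup {ε' : ℝ | 0 ≤ ε' ∧ ∀ π, InBall π₀ ε' π → IsBayes u π a}) π →
      IsBayes u π a) := by
  set S : Set ℝ := {ε' : ℝ | 0 ≤ ε' ∧ ∀ π, InBall π₀ ε' π → IsBayes u π a} with hS
  -- 0 ∈ S
  have h0 : (0:ℝ) ∈ S := by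
    refine ⟨le_refl 0, fun π hπ => ?_⟩
    have hEq : π = π₀ := funext fun j => le_antisymm
      (by linarith [(hπ.2 j).2]) (by linarith [(hπ.2 j).1])
    rw [hEq]; exact ha
  have hne : S.Nonempty := ⟨0, h0⟩
  -- bounded above by 1
  obtain ⟨πf, hπf, hπfnb⟩ := hfail
  have hbdd : BddAbove S := by
    refine ⟨1, fun ε hε => ?_⟩
    by_contra hlt
    push_neg at hlt
    apply hπfnb
    refine hε.2 πf ⟨hπf, fun j => ?_⟩
    have h1 : πf j ≤ 1 := by
      have := Finset.single_le_sum (fun i _ => hπf.1 i) (Finset.mem_univ j)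
      linarith [hπf.2 ▸ this]
    have h2 : π₀ j ≤ 1 := by
      have := Finset.single_le_sum (fun i _ => hπ₀.1 i) (Finset.mem_univ j)
      linarith [hπ₀.2 ▸ this]
    exact ⟨by linarith [hπf.1 j], by linarith [hπ₀.1 j]⟩
  set s : ℝ := sSup S with hs
  have hs0 : 0 ≤ s := le_csSup hbdd h0
  -- attainment
  have hatt : ∀ π, InBall π₀ s π → IsBayes u π a := by
    intro π hπ
    rcases eq_or_lt_of_le hs0 with hs0' | hspos
    · -- s = 0
      have hEq : π = π₀ := funext fun j => le_antisymm
        (by linarith [(hπ.2 j).2]) (by linarith [(hπ.2 j).1])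
      rw [hEq]; exact ha
    · intro b
      by_contra hPb
      push_neg at hPb
      set Q : ℝ := ∑ j, π₀ j * u a j - ∑ j, π₀ j * u b j with hQ
      set P : ℝ := ∑ j, π j * u a j - ∑ j, π j * u b j with hP
      have hQ0 : 0 ≤ Q := by have := ha b; simp only [hQ]; linarith
      have hP0 : P < 0 := by simp only [hP]; linarith
      have hD : 0 < Q + 1 - P := by linarith
      set t : ℝ := (Q + 1) / (Q + 1 - P) with ht
      have ht0 : 0 ≤ t := div_nonneg (by linarith) hD.le
      have ht1 : t < 1 := (div_lt_one hD).2 (by linarith)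
      -- t*s < s, get ε ∈ S with t*s < ε
      have hts : t * s < s := by nlinarith
      obtain ⟨ε, hεS, htsε⟩ := exists_lt_of_lt_csSup hne hts
      set πt : Fin m → ℝ := fun j => (1 - t) * π₀ j + t * π j with hπt
      have hπtd : IsDist πt := by
        constructor
        · intro j
          have := hπ₀.1 j; have := hπ.1.1 j
          have h1t : 0 ≤ 1 - t := by linarith
          positivity
        · simp only [hπt]
          rw [Finset.sum_add_distrib, ← Finset.mul_sum, ← Finset.mul_sum,
            hπ₀.2, hπ.1.2]
          ring
      have hπtball : InBall π₀ ε πt := by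
        refine ⟨hπtd, fun j => ?_⟩
        have h1 := (hπ.2 j).1
        have h2 := (hπ.2 j).2
        constructor
        · have : πt j - π₀ j = t * (π j - π₀ j) := by simp [hπt]; ring
          nlinarith
        · have : πt j - π₀ j = t * (π j - π₀ j) := by simp [hπt]; ring
          nlinarith
      have hBayes := hεS.2 πt hπtball b
      have hexp : ∀ c : A, ∑ j, πt j * u c j
          = (1 - t) * ∑ j, π₀ j * u c j + t * ∑ j, π j * u c j := by
        intro c
        simp only [hπt, add_mul, mul_assoc]
        rw [Finset.sum_add_distrib, ← Finset.mul_sum, ← Finset.mul_sum]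
      rw [hexp a, hexp b] at hBayes
      have hkey : 0 ≤ (1 - t) * Q + t * P := by simp only [hQ, hP]; nlinarith
      have hident : ((1 - t) * Q + t * P) * (Q + 1 - P) = P := by
        simp only [ht]; field_simp; ring
      nlinarith [mul_nonneg hkey hD.le]
  refine ⟨fun ε hε => ⟨fun h => le_csSup hbdd ⟨hε, h⟩, fun h π hπ => ?_⟩, hatt⟩
  refine hatt π ⟨hπ.1, fun j => ?_⟩
  have := (hπ.2 j).1; have := (hπ.2 j).2
  exact ⟨by linarith, by linarith⟩
end

section
/- Let (𝔸, Θ, u) be a finite decision problem with Θ = {θ₁, …, θ_m} and at least two acts, and let a ∈ 𝔸. The following are equivalent: (1) there exists a probability distribution π on Θ such that a is a Bayes-act with respect to π; (2) a is not strictly inadmissible, i.e., there do NOT exist weights β_b ≥ 0 for b ∈ 𝔸 \ {a} with Σ_{b ≠ a} β_b = 1 such that u(a, θ_j) < Σ_{b ≠ a} β_b · u(b, θ_j) for all j = 1, …, m. -/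
open Finset

/-- An act is a Bayes-act with respect to some probability distribution iff it is
not strictly inadmissible. -/
theorem bayes_somewhere_iff_not_strictly_inadmissible
    {A : Type} [Fintype A] [DecidableEq A] [Nontrivial A] {m : ℕ}
    (u : A → Fin m → ℝ) (a : A) :
    (∃ π : Fin m → ℝ, IsDist π ∧ IsBayes u π a) ↔ ¬ StrictlyInadmissible u a := by
  constructor
  · rintro ⟨π, ⟨hπ0, hπ1⟩, hB⟩ ⟨β, hβ0, hβ1, hβlt⟩
    obtain ⟨j0, hj0⟩ : ∃ j, 0 < π j := by
      by_contra h
      push_neg at h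
      have hz : ∑ j, π j = 0 :=
        Finset.sum_eq_zero fun j _ => le_antisymm (h j) (hπ0 j)
      rw [hz] at hπ1
      norm_num at hπ1
    have key : ∑ j, π j * u a j < ∑ j, π j * (∑ b ∈ univ.erase a, β b * u b j) := by
      apply Finset.sum_lt_sum
      · intro j _
        exact mul_le_mul_of_nonneg_left (le_of_lt (hβlt j)) (hπ0 j)
      · exact ⟨j0, Finset.mem_univ _, mul_lt_mul_of_pos_left (hβlt j0) hj0⟩
    have swap : ∑ j, π j * (∑ b ∈ univ.erase a, β b * u b j)
        = ∑ b ∈ univ.erase a, β b * ∑ j, π j * u b j := by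
      simp_rw [Finset.mul_sum]
      rw [Finset.sum_comm]
      congr 1; funext b; congr 1; funext j; ring
    have key2 : ∑ b ∈ univ.erase a, β b * ∑ j, π j * u b j ≤ ∑ j, π j * u a j := by
      calc ∑ b ∈ univ.erase a, β b * ∑ j, π j * u b j
          ≤ ∑ b ∈ univ.erase a, β b * ∑ j, π j * u a j :=
            Finset.sum_le_sum fun b _ => mul_le_mul_of_nonneg_left (hB b) (hβ0 b)
        _ = ∑ j, π j * u a j := by rw [← Finset.sum_mul, hβ1, one_mul]
    rw [swap] at key
    linarith
  · intro hNSI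
    set s : Set (Fin m → ℝ) := Set.univ.pi fun _ => Set.Ioi (0:ℝ) with hs_def
    set t : Set (Fin m → ℝ) :=
      {x | ∃ β : A → ℝ, (∀ b, 0 ≤ β b) ∧ (∑ b ∈ univ.erase a, β b = 1) ∧
        x = fun j => ∑ b ∈ univ.erase a, β b * (u b j - u a j)} with ht_def
    have hs_open : IsOpen s := isOpen_set_pi Set.finite_univ fun _ _ => isOpen_Ioi
    have hs_conv : Convex ℝ s := convex_pi fun i _ => convex_Ioi 0
    have ht_conv : Convex ℝ t := by
      rintro x ⟨β, hβ0, hβ1, rfl⟩ y ⟨γ, hγ0, hγ1, rfl⟩ p q hp hq hpq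
      refine ⟨fun b => p * β b + q * γ b,
        fun b => add_nonneg (mul_nonneg hp (hβ0 b)) (mul_nonneg hq (hγ0 b)), ?_, ?_⟩
      · rw [Finset.sum_add_distrib, ← Finset.mul_sum, ← Finset.mul_sum, hβ1, hγ1]
        linarith
      · funext j
        simp only [Pi.add_apply, Pi.smul_apply, smul_eq_mul, Finset.mul_sum,
          ← Finset.sum_add_distrib]
        congr 1; funext b; ring
    have h_disj : Disjoint s t := by
      rw [Set.disjoint_left]
      rintro x hxs ⟨β, hβ0, hβ1, rfl⟩
      apply hNSI
      refine ⟨β, hβ0, hβ1, fun j => ?_⟩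
      have hx : 0 < ∑ b ∈ univ.erase a, β b * (u b j - u a j) := hxs j (Set.mem_univ j)
      have hsplit : ∑ b ∈ univ.erase a, β b * (u b j - u a j)
          = (∑ b ∈ univ.erase a, β b * u b j) - u a j := by
        simp_rw [mul_sub]
        rw [Finset.sum_sub_distrib, ← Finset.sum_mul, hβ1, one_mul]
      linarith
    obtain ⟨f, c, hfs, hft⟩ := geometric_hahn_banach_open hs_conv hs_open ht_conv h_disj
    set e : Fin m → (Fin m → ℝ) := fun j => Pi.single j 1 with he_def
    have f_repr : ∀ x : Fin m → ℝ, f x = ∑ j, x j * f (e j) := by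
      intro x
      have hx : x = ∑ j, x j • e j := by
        funext k
        rw [Finset.sum_apply]
        simp [he_def, Pi.single_apply]
      calc f x = f (∑ j, x j • e j) := by rw [← hx]
        _ = ∑ j, x j * f (e j) := by rw [map_sum]; simp
    have one_mem : (fun _ => (1:ℝ)) ∈ s := fun j _ => Set.mem_Ioi.mpr one_pos
    obtain ⟨b0, hb0⟩ := exists_ne a
    have hb0m : b0 ∈ univ.erase a := Finset.mem_erase.mpr ⟨hb0, Finset.mem_univ _⟩
    have indsum : ∀ b1 ∈ univ.erase a, ∀ g : A → ℝ,
        ∑ b ∈ univ.erase a, (if b = b1 then (1:ℝ) else 0) * g b = g b1 := by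
      intro b1 hb1 g
      simp only [ite_mul, one_mul, zero_mul]
      rw [Finset.sum_ite_eq' (univ.erase a) b1 g, if_pos hb1]
    have mem_t : ∀ b1 ∈ univ.erase a,
        (fun j => u b1 j - u a j) ∈ t := by
      intro b1 hb1
      refine ⟨fun b => if b = b1 then 1 else 0, fun b => by positivity, ?_, ?_⟩
      · have := indsum b1 hb1 (fun _ => (1:ℝ))
        simpa using this
      · funext j
        rw [indsum b1 hb1 (fun b => u b j - u a j)]
    -- Claim A : each coefficient of f is ≤ 0
    have claimA : ∀ j, f (e j) ≤ 0 := by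
      intro j
      by_contra h
      push_neg at h
      obtain ⟨T, hT_def⟩ : ∃ T : ℝ, T = |(c - f (fun _ => 1)) / f (e j)| + 1 := ⟨_, rfl⟩
      have hT0 : 0 ≤ T := by
        have := abs_nonneg ((c - f (fun _ => 1)) / f (e j)); linarith
      have hx_mem : (T • e j + fun _ => (1:ℝ)) ∈ s := by
        intro k _
        have h1 : (0:ℝ) ≤ e j k := by
          simp only [he_def, Pi.single_apply]
          split <;> norm_num
        have h2 : (0:ℝ) ≤ T * e j k := mul_nonneg hT0 h1
        simp only [Pi.add_apply, Pi.smul_apply, smul_eq_mul, Set.mem_Ioi]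
        linarith
      have hfx : f (T • e j + fun _ => (1:ℝ)) = T * f (e j) + f (fun _ => 1) := by
        rw [map_add, map_smul, smul_eq_mul]
      have hlt := hfs _ hx_mem
      rw [hfx] at hlt
      have hTval : (c - f (fun _ => 1)) / f (e j) ≤ T - 1 := by
        have := le_abs_self ((c - f (fun _ => 1)) / f (e j)); linarith
      have : c - f (fun _ => 1) ≤ (T - 1) * f (e j) := by
        rw [div_le_iff₀ h] at hTval
        linarith
      nlinarith
    -- Claim B : 0 ≤ c
    have hone_repr : f (fun _ => (1:ℝ)) = ∑ j, f (e j) := by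
      rw [f_repr]; simp
    have hone_le : f (fun _ => (1:ℝ)) ≤ 0 := by
      rw [hone_repr]
      exact Finset.sum_nonpos fun j _ => claimA j
    have claimB : 0 ≤ c := by
      by_contra hc
      push_neg at hc
      rcases lt_or_eq_of_le hone_le with h1 | h1
      · have hε : 0 < c / (2 * f (fun _ => 1)) := by
          apply div_pos_of_neg_of_neg hc
          linarith
        have hmem : (c / (2 * f (fun _ => 1))) • (fun _ => (1:ℝ)) ∈ s := by
          intro k _
          simp only [Pi.smul_apply, smul_eq_mul, mul_one, Set.mem_Ioi]
          exact hε
        have := hfs _ hmem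
        rw [map_smul, smul_eq_mul] at this
        have hne : f (fun _ => (1:ℝ)) ≠ 0 := ne_of_lt h1
        have heq : c / (2 * f (fun _ => 1)) * f (fun _ => 1) = c / 2 := by
          field_simp
        rw [heq] at this
        linarith
      · have := hfs _ one_mem
        rw [h1] at this
        linarith
    -- Claim C : some coefficient is < 0
    have claimC : ∃ j, f (e j) < 0 := by
      by_contra h
      push_neg at h
      have hall : ∀ j, f (e j) = 0 := fun j => le_antisymm (claimA j) (h j)
      have hy := hft _ (mem_t b0 hb0m)
      have hy0 : f (fun j => u b0 j - u a j) = 0 := by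
        rw [f_repr]
        exact Finset.sum_eq_zero fun j _ => by rw [hall j, mul_zero]
      have h1 := hfs _ one_mem
      rw [hone_repr] at h1
      have : (0:ℝ) < c := by
        have : ∑ j, f (e j) = 0 := Finset.sum_eq_zero fun j _ => hall j
        linarith
      rw [hy0] at hy
      linarith
    obtain ⟨j1, hj1⟩ := claimC
    set S : ℝ := ∑ j, -f (e j) with hS_def
    have hS_pos : 0 < S :=
      Finset.sum_pos' (fun j _ => by have := claimA j; linarith)
        ⟨j1, Finset.mem_univ _, by linarith⟩
    refine ⟨fun j => -f (e j) / S,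
      ⟨fun j => div_nonneg (neg_nonneg.mpr (claimA j)) hS_pos.le, ?_⟩, ?_⟩
    · rw [← Finset.sum_div]
      rw [← hS_def, div_self (ne_of_gt hS_pos)]
    · intro b
      rcases eq_or_ne b a with rfl | hba
      · exact le_refl _
      have hy := hft _ (mem_t b (Finset.mem_erase.mpr ⟨hba, Finset.mem_univ _⟩))
      rw [f_repr] at hy
      have heq : ∑ j, (u b j - u a j) * f (e j)
          = ∑ j, -f (e j) * u a j - ∑ j, -f (e j) * u b j := by
        rw [← Finset.sum_sub_distrib]
        congr 1; funext j; ring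
      rw [heq] at hy
      have hkey2 : ∑ j, -f (e j) * u b j ≤ ∑ j, -f (e j) * u a j := by linarith
      calc ∑ j, -f (e j) / S * u b j = (∑ j, -f (e j) * u b j) / S := by
            rw [Finset.sum_div]; congr 1; funext j; ring
        _ ≤ (∑ j, -f (e j) * u a j) / S := (div_le_div_iff_of_pos_right hS_pos).mpr hkey2
        _ = ∑ j, -f (e j) / S * u a j := by
            rw [Finset.sum_div]; congr 1; funext j; ring
end

section
/- Let (𝔸, Θ, u) be a finite decision problem with Θ = {θ₁, …, θ_m}, let π₀ be a probability distribution on Θ, let a ∈ 𝔸 be a Bayes-act with respect to π₀, and define R(ε) := min_{b ≠ a} inf{Σ_j π_j (u(a, θ_j) − u(b, θ_j)) : π ∈ B(π₀, ε)}. Then for every ε ≥ 0: if ε ≤ rob(a, π₀) then R(ε) ≥ 0, and if ε > rob(a, π₀) then R(ε) < 0. Consequently, the bisection algorithm that maintains an interval [ε_L, ε_U] with R(ε_L) ≥ 0 and R(ε_U) < 0 (initialized with ε_L = 0 and any ε_U with R(ε_U) < 0) and halves it by testing the sign of R at the midpoint satisfies rob(a, π₀) ∈ [ε_L, ε_U]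 at every iteration, and after k iterations returns a value ε_L with |ε_L − rob(a, π₀)| ≤ (ε_U − ε_L)/2^k. -/
open Finset

/-- The set of acts other than `a` is nonempty when there are at least two acts. -/
theorem erase_univ_nonempty {A : Type} [Fintype A] [DecidableEq A] [Nontrivial A]
    (a : A) : (Finset.univ.erase a).Nonempty := by
  obtain ⟨b, hb⟩ := exists_ne a
  exact ⟨b, Finset.mem_erase.mpr ⟨hb, Finset.mem_univ b⟩⟩

/-- `R_{a,b}(ε)`: value of the LP minimizing `∑ⱼ πⱼ (u(a,θⱼ) − u(b,θⱼ))` over `B(π₀,ε)`. -/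
noncomputable def Rab {A : Type} [Fintype A] {m : ℕ} (u : A → Fin m → ℝ)
    (π₀ : Fin m → ℝ) (a b : A) (ε : ℝ) : ℝ :=
  sInf {x : ℝ | ∃ π : Fin m → ℝ, InBall π₀ ε π ∧ x = ∑ j, π j * (u a j - u b j)}

/-- `R(ε) := min_{b ≠ a} R_{a,b}(ε)`. -/
noncomputable def Rmin {A : Type} [Fintype A] [DecidableEq A] [Nontrivial A] {m : ℕ}
    (u : A → Fin m → ℝ) (π₀ : Fin m → ℝ) (a : A) (ε : ℝ) : ℝ :=
  (Finset.univ.erase a).inf' (erase_univ_nonempty a) (fun b => Rab u π₀ a b ε)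

/-- `rob(a, π₀)`: the robustness radius, i.e. the supremum of all ε ≥ 0 such that
`a` is a Bayes-act with respect to every prior in `B(π₀, ε)`. -/
noncomputable def rob {A : Type} [Fintype A] {m : ℕ} (u : A → Fin m → ℝ)
    (π₀ : Fin m → ℝ) (a : A) : ℝ :=
  sSup {ε : ℝ | 0 ≤ ε ∧ ∀ π, InBall π₀ ε π → IsBayes u π a}

/-- The bisection scheme: starting from an interval `(εL, εU)`, repeatedly test the
sign of `R` at the midpoint and keep the half on which the sign change occurs. -/
noncomputable def bisect (R : ℝ → ℝ) : ℕ → ℝ × ℝ → ℝ × ℝ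
  | 0, p => p
  | k + 1, p =>
      if 0 ≤ R ((p.1 + p.2) / 2) then bisect R k ((p.1 + p.2) / 2, p.2)
      else bisect R k (p.1, (p.1 + p.2) / 2)

/-- Sign characterization of `R` at the robustness radius, and correctness of the
bisection algorithm: the interval always brackets `rob(a, π₀)` and after `k`
iterations the returned left endpoint is within `(εU − εL)/2^k` of `rob(a, π₀)`. -/
theorem bisection_correct
    {A : Type} [Fintype A] [DecidableEq A] [Nontrivial A] {m : ℕ}
    (u : A → Fin m → ℝ) (π₀ : Fin m → ℝ) (hπ₀ : IsDist π₀)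
    (a : A) (ha : IsBayes u π₀ a)
    (hfail : ∃ π : Fin m → ℝ, IsDist π ∧ ¬ IsBayes u π a) :
    (∀ ε : ℝ, 0 ≤ ε →
      (ε ≤ rob u π₀ a → 0 ≤ Rmin u π₀ a ε) ∧
      (rob u π₀ a < ε → Rmin u π₀ a ε < 0)) ∧
    (∀ εL εU : ℝ, 0 ≤ εL → εL ≤ εU →
      0 ≤ Rmin u π₀ a εL → Rmin u π₀ a εU < 0 → ∀ k : ℕ,
        (bisect (Rmin u π₀ a) k (εL, εU)).1 ≤ rob u π₀ a ∧
        rob u π₀ a ≤ (bisect (Rmin u π₀ a) k (εL, εU)).2 ∧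
        |(bisect (Rmin u π₀ a) k (εL, εU)).1 - rob u π₀ a| ≤ (εU - εL) / 2 ^ k) := by

  classical
  set Sset : Set ℝ := {ε : ℝ | 0 ≤ ε ∧ ∀ π, InBall π₀ ε π → IsBayes u π a} with hSset
  have hrob : rob u π₀ a = sSup Sset := rfl
  have h01 : ∀ {π : Fin m → ℝ}, IsDist π → ∀ j, π j ≤ 1 := by
    intro π hπ j
    rw [← hπ.2]
    exact Finset.single_le_sum (fun i _ => hπ.1 i) (Finset.mem_univ j)
  have hmem0 : (0:ℝ) ∈ Sset := by
    refine ⟨le_refl 0, fun π hπ => ?_⟩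
    have hp : π = π₀ := by
      funext j
      have h1 := (hπ.2 j).1
      have h2 := (hπ.2 j).2
      linarith [le_antisymm (by linarith : π j ≤ π₀ j) (by linarith : π₀ j ≤ π j)]
    rw [hp]; exact ha
  have hbdd : BddAbove Sset := by
    refine ⟨1, fun ε hε => ?_⟩
    by_contra hlt
    push_neg at hlt
    obtain ⟨π, hπd, hπb⟩ := hfail
    apply hπb
    apply hε.2
    refine ⟨hπd, fun j => ⟨?_, ?_⟩⟩
    · have := h01 hπ₀ j; have := hπd.1 j; linarith
    · have := h01 hπd j; have := hπ₀.1 j; linarith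
  have hdown : ∀ ε' ε : ℝ, 0 ≤ ε' → ε' ≤ ε → ε ∈ Sset → ε' ∈ Sset := by
    intro ε' ε h0 hle hε
    refine ⟨h0, fun π hπ => hε.2 π ⟨hπ.1, fun j => ⟨?_, ?_⟩⟩⟩
    · have := (hπ.2 j).1; linarith
    · have := (hπ.2 j).2; linarith
  have hrob0 : 0 ≤ rob u π₀ a := by rw [hrob]; exact le_csSup hbdd hmem0
  -- key: rob itself lies in Sset
  have hrobmem : ∀ π, InBall π₀ (rob u π₀ a) π → IsBayes u π a := by
    intro π hπ b
    by_contra hcon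
    push_neg at hcon
    rcases eq_or_lt_of_le hrob0 with h0 | hpos
    · have hp : π = π₀ := by
        funext j
        have h1 := (hπ.2 j).1
        have h2 := (hπ.2 j).2
        rw [← h0] at h1 h2
        linarith [le_antisymm (by linarith : π j ≤ π₀ j) (by linarith : π₀ j ≤ π j)]
      rw [hp] at hcon
      exact absurd (ha b) (not_le.mpr hcon)
    · set r := rob u π₀ a with hr
      set c := ∑ j, π j * (u a j - u b j) with hc
      set d := ∑ j, π₀ j * (u a j - u b j) with hd
      have hcsplit : c = ∑ j, π j * u a j - ∑ j, π j * u b j := by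
        rw [hc, ← Finset.sum_sub_distrib]
        exact Finset.sum_congr rfl fun j _ => by ring
      have hdsplit : d = ∑ j, π₀ j * u a j - ∑ j, π₀ j * u b j := by
        rw [hd, ← Finset.sum_sub_distrib]
        exact Finset.sum_congr rfl fun j _ => by ring
      have hc0 : c < 0 := by rw [hcsplit]; linarith
      have hd0 : 0 ≤ d := by rw [hdsplit]; have := ha b; linarith
      have hdc : 0 < d - c := by linarith
      set t := (-c) / (2 * (d - c)) with ht
      have ht0 : 0 < t := div_pos (by linarith) (by linarith)
      have ht1 : t ≤ 1/2 := by
        rw [ht, div_le_iff₀ (by linarith)]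
        linarith
      have hkey : (1 - t) * c + t * d < 0 := by
        have htdc : t * (d - c) = -c / 2 := by
          rw [ht]; field_simp
        nlinarith [htdc]
      set ε := (1 - t) * r with hε
      have hεr : ε < r := by nlinarith
      have hε0 : 0 ≤ ε := by nlinarith
      have hεS : ε ∈ Sset := by
        obtain ⟨s, hs, hεs⟩ := exists_lt_of_lt_csSup ⟨0, hmem0⟩ (hrob ▸ hεr)
        exact hdown ε s hε0 hεs.le hs
      set π' := fun j => (1 - t) * π j + t * π₀ j with hπ'
      have hπ'ball : InBall π₀ ε π' := by
        refine ⟨⟨fun j => ?_, ?_⟩, fun j => ⟨?_, ?_⟩⟩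
        · show 0 ≤ (1 - t) * π j + t * π₀ j
          have := hπ.1.1 j; have := hπ₀.1 j; nlinarith
        · simp only [hπ']
          rw [Finset.sum_add_distrib, ← Finset.mul_sum, ← Finset.mul_sum, hπ.1.2, hπ₀.2]
          ring
        · have h1 := (hπ.2 j).1
          show π₀ j - ε ≤ (1 - t) * π j + t * π₀ j
          rw [hε]
          nlinarith
        · have h2 := (hπ.2 j).2
          show (1 - t) * π j + t * π₀ j ≤ π₀ j + ε
          rw [hε]
          nlinarith
      have hbayes := hεS.2 π' hπ'ball b
      have hsum : ∑ j, π' j * u a j - ∑ j, π' j * u b j = (1 - t) * c + t * d := by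
        rw [hc, hd, Finset.mul_sum, Finset.mul_sum, ← Finset.sum_add_distrib,
          ← Finset.sum_sub_distrib]
        refine Finset.sum_congr rfl fun j _ => ?_
        show ((1 - t) * π j + t * π₀ j) * u a j - ((1 - t) * π j + t * π₀ j) * u b j
          = (1 - t) * (π j * (u a j - u b j)) + t * (π₀ j * (u a j - u b j))
        ring
      rw [← hsum] at hkey
      linarith
  have hsign_pos : ∀ ε : ℝ, 0 ≤ ε → ε ≤ rob u π₀ a → 0 ≤ Rmin u π₀ a ε := by
    intro ε h0 hle
    have hεS : ε ∈ Sset := hdown ε (rob u π₀ a) h0 hle ⟨hrob0, hrobmem⟩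
    apply Finset.le_inf'
    intro b hb
    apply Real.sInf_nonneg
    rintro x ⟨π, hπ, rfl⟩
    have hB := hεS.2 π hπ b
    have hsplit : ∑ j, π j * (u a j - u b j) = ∑ j, π j * u a j - ∑ j, π j * u b j := by
      rw [← Finset.sum_sub_distrib]
      exact Finset.sum_congr rfl fun j _ => by ring
    rw [hsplit]; linarith
  have hsign_neg : ∀ ε : ℝ, 0 ≤ ε → rob u π₀ a < ε → Rmin u π₀ a ε < 0 := by
    intro ε h0 hlt
    have hεS : ε ∉ Sset := fun h => absurd (hrob ▸ le_csSup hbdd h) (not_le.mpr hlt)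
    have hex : ∃ π, InBall π₀ ε π ∧ ¬ IsBayes u π a := by
      by_contra h
      push_neg at h
      exact hεS ⟨h0, fun π hπ => h π hπ⟩
    obtain ⟨π, hπ, hnb⟩ := hex
    simp only [IsBayes, not_forall, not_le] at hnb
    obtain ⟨b, hb⟩ := hnb
    have hba : b ≠ a := by rintro rfl; exact lt_irrefl _ hb
    have hmemb : b ∈ Finset.univ.erase a := Finset.mem_erase.mpr ⟨hba, Finset.mem_univ b⟩
    refine lt_of_le_of_lt (Finset.inf'_le _ hmemb) ?_
    have hbddb : BddBelow {x : ℝ | ∃ π : Fin m → ℝ, InBall π₀ ε π ∧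
        x = ∑ j, π j * (u a j - u b j)} := by
      refine ⟨-∑ j, |u a j - u b j|, ?_⟩
      rintro x ⟨π', hπ', rfl⟩
      rw [← Finset.sum_neg_distrib]
      apply Finset.sum_le_sum
      intro j _
      have h0j := hπ'.1.1 j
      have h1j := h01 hπ'.1 j
      rcases abs_cases (u a j - u b j) with ⟨h1, h2⟩ | ⟨h1, h2⟩ <;> nlinarith
    have hxmem : (∑ j, π j * (u a j - u b j)) ∈ {x : ℝ | ∃ π : Fin m → ℝ, InBall π₀ ε π ∧
        x = ∑ j, π j * (u a j - u b j)} := ⟨π, hπ, rfl⟩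
    refine lt_of_le_of_lt (csInf_le hbddb hxmem) ?_
    have hsplit : ∑ j, π j * (u a j - u b j) = ∑ j, π j * u a j - ∑ j, π j * u b j := by
      rw [← Finset.sum_sub_distrib]
      exact Finset.sum_congr rfl fun j _ => by ring
    rw [hsplit]; linarith
  have hLb : ∀ εL : ℝ, 0 ≤ εL → 0 ≤ Rmin u π₀ a εL → εL ≤ rob u π₀ a := by
    intro εL h0 hR
    by_contra h
    push_neg at h
    exact absurd hR (not_le.mpr (hsign_neg εL h0 h))
  have hUb : ∀ εU : ℝ, 0 ≤ εU → Rmin u π₀ a εU < 0 → rob u π₀ a ≤ εU := by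
    intro εU h0 hR
    by_contra h
    push_neg at h
    exact absurd (hsign_pos εU h0 h.le) (not_le.mpr hR)
  constructor
  · intro ε hε
    exact ⟨hsign_pos ε hε, hsign_neg ε hε⟩
  · have main : ∀ k : ℕ, ∀ εL εU : ℝ, 0 ≤ εL → εL ≤ εU →
        0 ≤ Rmin u π₀ a εL → Rmin u π₀ a εU < 0 →
        (bisect (Rmin u π₀ a) k (εL, εU)).1 ≤ rob u π₀ a ∧
        rob u π₀ a ≤ (bisect (Rmin u π₀ a) k (εL, εU)).2 ∧
        (bisect (Rmin u π₀ a) k (εL, εU)).2 - (bisect (Rmin u π₀ a) k (εL, εU)).1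
          ≤ (εU - εL) / 2 ^ k := by
      intro k
      induction k with
      | zero =>
        intro εL εU h0 hLU hRL hRU
        simp only [bisect, pow_zero]
        exact ⟨hLb εL h0 hRL, hUb εU (h0.trans hLU) hRU, by linarith⟩
      | succ k ih =>
        intro εL εU h0 hLU hRL hRU
        have h2k : (0:ℝ) < 2 ^ k := by positivity
        have hhalf : (εU - (εL + εU) / 2) / 2 ^ k = (εU - εL) / 2 ^ (k + 1) := by
          rw [pow_succ]; field_simp; ring
        have hhalf' : ((εL + εU) / 2 - εL) / 2 ^ k = (εU - εL) / 2 ^ (k + 1) := by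
          rw [pow_succ]; field_simp; ring
        by_cases h : 0 ≤ Rmin u π₀ a ((εL + εU) / 2)
        · have hstep : bisect (Rmin u π₀ a) (k + 1) (εL, εU)
              = bisect (Rmin u π₀ a) k ((εL + εU) / 2, εU) := by
            simp only [bisect, h, if_true]
          rw [hstep]
          obtain ⟨h1, h2, h3⟩ := ih ((εL + εU) / 2) εU (by linarith) (by linarith) h hRU
          exact ⟨h1, h2, by rw [← hhalf]; exact h3⟩
        · have hstep : bisect (Rmin u π₀ a) (k + 1) (εL, εU)
              = bisect (Rmin u π₀ a) k (εL, (εL + εU) / 2) := by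
            simp only [bisect, h, if_false]
          rw [hstep]
          obtain ⟨h1, h2, h3⟩ := ih εL ((εL + εU) / 2) h0 (by linarith) hRL
            (lt_of_not_ge h)
          exact ⟨h1, h2, by rw [← hhalf']; exact h3⟩
    intro εL εU hεL hLU hRL hRU k
    obtain ⟨h1, h2, h3⟩ := main k εL εU hεL hLU hRL hRU
    refine ⟨h1, h2, ?_⟩
    rw [abs_of_nonpos (by linarith)]
    linarith
end
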